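/- arXiv:math/0310233 — 6 statements merged into one kernel-verified Lean document; each statement's English description precedes it below -/
import Mathlib

section
/- Let B° = A°N ⊆ SL(n,ℝ) where A° is the group of diagonal matrices a(s) = diag(e^{s₁},…,e^{s_n}) with Σ sᵢ = 0 and N the unipotent upper-triangular group. Let ϱ be the right Haar measure on B° given by dϱ(a(s)n(t)) = e^{2δ(s)} ds dt with δ(s) = Σ_{k=1}^{n} (n-k)s_k. For C ∈ ℝ let B_T^C = {a(s)n(t) ∈ B° : ‖a(s)n(t)‖ < T, s_i > C for i = 1,…,n-1}, where ‖g‖ = (Σ g_{ij}²)^{1/2}. Then ϱ(B_T^C) = c_n · ∫_{A_T^C} (T² - N(s))^{n(n-1)/4} · exp(Σ_k (n-k)s_k) ds, where N(s) = Σ_i e^{2sᵢ}, A_T^C = {a(s) : sᵢ > C for i < n, N(s) < T²} (with the integration restricted to where T² - N(s) > 0), and c_n = π^{n(n-1)/4}/Γ(1 + n(n-1)/4). -/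
open MeasureTheory Real Filter Set

noncomputable section

/-- Index set for the strictly-upper-triangular entries `t_{ij}`, `i < j`. -/
def UTidx (n : ℕ) := {p : Fin n × Fin n // p.1 < p.2}

instance (n : ℕ) : Fintype (UTidx n) := by unfold UTidx; infer_instance

/-- The full vector `s = (s₁,…,sₙ)` with `Σ sᵢ = 0`, parametrized by its
first `n-1` coordinates. -/
def sfull (n : ℕ) (s : Fin (n - 1) → ℝ) : Fin n → ℝ := fun i =>
  if h : (i : ℕ) < n - 1 then s ⟨i, h⟩ else -(∑ j, s j)

/-- `N(s) = Σᵢ e^{2 sᵢ}`. -/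
def Nfun (n : ℕ) (s : Fin (n - 1) → ℝ) : ℝ := ∑ i, Real.exp (2 * sfull n s i)

/-- `‖a(s) n(t)‖² = Σᵢ e^{2 sᵢ} + Σ_{i<j} e^{2 sᵢ} t_{ij}²` (Hilbert–Schmidt norm). -/
def normSq (n : ℕ) (s : Fin (n - 1) → ℝ) (t : UTidx n → ℝ) : ℝ :=
  Nfun n s + ∑ p : UTidx n, Real.exp (2 * sfull n s p.val.1) * (t p) ^ 2

/-- `δ(s) = Σ_{k=1}^{n} (n-k) s_k`. -/
def deltafun (n : ℕ) (s : Fin (n - 1) → ℝ) : ℝ :=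
  ∑ k : Fin n, ((n : ℝ) - ((k : ℕ) + 1)) * sfull n s k

/-- The coordinate region of `B_T° = {b ∈ B° : ‖b‖ < T}`. -/
def BTo (n : ℕ) (T : ℝ) : Set ((Fin (n - 1) → ℝ) × (UTidx n → ℝ)) :=
  {x | normSq n x.1 x.2 < T ^ 2}

/-- `ϱ(B_T°)`, the right Haar measure of `B_T°`, in the coordinates
`dϱ(a(s)n(t)) = e^{2δ(s)} ds dt`. -/
def rhoO (n : ℕ) (T : ℝ) : ℝ := ∫ x in BTo n T, Real.exp (2 * deltafun n x.1)

end

/-! For fixed `s`, the fibre of the region over `s` is the ellipsoid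
`∑_{i<j} (e^{s_i} t_{ij})² < T² - N(s)` in the `m = n(n-1)/2` coordinates `t`, of volume
`π^{m/2} / Γ(1 + m/2) · (T² - N(s))^{m/2} / ∏_{i<j} e^{s_i}`,
and `∏_{i<j} e^{s_i} = e^{δ(s)}` since the (1-based) index `i` occurs `n - i` times.
Tonelli's theorem then turns the weight `e^{2δ(s)}` into `e^{δ(s)}`; all integrands are
nonnegative, so no integrability has to be checked. -/

open scoped ENNReal

section Fubini

variable {α β : Type*} [MeasurableSpace α] [MeasurableSpace β] {μ : Measure α} {ν : Measure β}
  [SFinite ν]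

theorem setLIntegral_prod_comp_fst {S : Set (α × β)} (hS : MeasurableSet S) {g : α → ℝ≥0∞}
    (hg : Measurable g) :
    ∫⁻ z in S, g z.1 ∂μ.prod ν = ∫⁻ a, g a * ν (Prod.mk a ⁻¹' S) ∂μ :=
  calc ∫⁻ z in S, g z.1 ∂μ.prod ν = (μ.prod ν).withDensity (fun z ↦ g z.1) S :=
        (withDensity_apply _ hS).symm
    _ = (μ.withDensity g).prod ν S := by rw [prod_withDensity_left hg]
    _ = ∫⁻ a, ν (Prod.mk a ⁻¹' S) ∂μ.withDensity g := Measure.prod_apply hS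
    _ = ∫⁻ a, g a * ν (Prod.mk a ⁻¹' S) ∂μ :=
        lintegral_withDensity_eq_lintegral_mul _ hg (measurable_measure_prodMk_left hS)

end Fubini

theorem volume_sum_mul_sq_lt {ι : Type*} [Fintype ι] {c : ι → ℝ} (hc : ∀ i, 0 < c i) {R : ℝ}
    (hR : 0 < R) :
    volume {t : ι → ℝ | ∑ i, (c i * t i) ^ 2 < R} =
      ENNReal.ofReal (R ^ ((Fintype.card ι : ℝ) / 2) * π ^ ((Fintype.card ι : ℝ) / 2) /
        Gamma ((Fintype.card ι : ℝ) / 2 + 1) / ∏ i, c i) := by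
  classical
  have sqrt_pow (x : ℝ) (hx : 0 ≤ x) : √x ^ Fintype.card ι = x ^ ((Fintype.card ι : ℝ) / 2) := by
    rw [Real.sqrt_eq_rpow, ← Real.rpow_natCast, ← Real.rpow_mul hx, one_div_mul_eq_div]
  let L : (ι → ℝ) →ₗ[ℝ] ι → ℝ := Matrix.toLin' (Matrix.diagonal fun i ↦ c i / √R)
  have hdet : LinearMap.det L = (∏ i, c i) / R ^ ((Fintype.card ι : ℝ) / 2) := by
    rw [LinearMap.det_toLin', Matrix.det_diagonal, Finset.prod_div_distrib, Finset.prod_const,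
      Finset.card_univ, sqrt_pow R hR.le]
  have hset : {t : ι → ℝ | ∑ i, (c i * t i) ^ 2 < R} =
      L ⁻¹' {x | ∑ i, |x i| ^ (2 : ℝ) < 1} := by
    ext t
    simp only [Set.mem_preimage, Set.mem_ofPred_eq, L, Matrix.toLin'_apply,
      Matrix.mulVec_diagonal, Real.rpow_two, sq_abs, div_mul_eq_mul_div, div_pow,
      Real.sq_sqrt hR.le, ← Finset.sum_div, div_lt_one hR]
  have hprod : 0 < ∏ i, c i := Finset.prod_pos fun i _ ↦ hc i
  rw [hset, Measure.addHaar_preimage_linearMap _ (by rw [hdet]; positivity),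
    volume_sum_rpow_lt_one ι one_le_two, ← ENNReal.ofReal_mul (abs_nonneg _), hdet]
  congr 1
  rw [Real.Gamma_add_one (by norm_num), Real.Gamma_one_half_eq, abs_of_pos (by positivity),
    show 2 * (1 / 2 * √π) = √π by ring, sqrt_pow π Real.pi_pos.le]
  field_simp

theorem Fin.card_subtype_gt {n : ℕ} (i : Fin n) :
    Fintype.card {j : Fin n // i < j} = n - 1 - i := by
  rw [Fintype.card_subtype, ← Fin.card_Ioi]
  congr 1
  ext
  simp

namespace UTidx

def equivSigma (n : ℕ) : UTidx n ≃ Σ i : Fin n, {j : Fin n // i < j} where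
  toFun p := ⟨p.1.1, p.1.2, p.2⟩
  invFun q := ⟨(q.1, q.2.1), q.2.2⟩

theorem card_mul_two (n : ℕ) : Fintype.card (UTidx n) * 2 = n * (n - 1) := by
  rw [Fintype.card_congr (equivSigma n), Fintype.card_sigma]
  simp_rw [Fin.card_subtype_gt]
  rw [Fin.sum_univ_eq_sum_range (fun i ↦ n - 1 - i) n,
    Finset.sum_range_reflect (fun i ↦ i) n, Finset.sum_range_id_mul_two]

theorem sum_comp_fst (n : ℕ) (f : Fin n → ℝ) :
    ∑ p : UTidx n, f p.1.1 = ∑ k : Fin n, ((n : ℝ) - ((k : ℕ) + 1)) * f k := by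
  rw [← (equivSigma n).symm.sum_comp, ← Finset.univ_sigma_univ, Finset.sum_sigma]
  refine Finset.sum_congr rfl fun k _ ↦ ?_
  change ∑ _j : {j : Fin n // k < j}, f k = _
  rw [Finset.sum_const, Finset.card_univ, Fin.card_subtype_gt, nsmul_eq_mul, Nat.sub_sub,
    add_comm 1, Nat.cast_sub k.isLt]
  push_cast
  ring

end UTidx

section Coordinates

variable {n : ℕ}

@[fun_prop]
theorem continuous_sfull (i : Fin n) : Continuous fun s ↦ sfull n s i := by
  unfold sfull
  split_ifs <;> fun_prop

@[fun_prop]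
theorem measurable_normSq :
    Measurable fun x : (Fin (n - 1) → ℝ) × (UTidx n → ℝ) ↦ normSq n x.1 x.2 := by
  unfold normSq Nfun
  fun_prop

@[fun_prop]
theorem measurable_deltafun : Measurable (deltafun n) := by
  unfold deltafun
  fun_prop

@[fun_prop]
theorem measurable_Nfun : Measurable (Nfun n) := by
  unfold Nfun
  fun_prop

theorem prod_exp_sfull_fst (s : Fin (n - 1) → ℝ) :
    ∏ p : UTidx n, exp (sfull n s p.1.1) = exp (deltafun n s) := by
  rw [← Real.exp_sum, UTidx.sum_comp_fst]
  rfl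

theorem normSq_lt_iff {s : Fin (n - 1) → ℝ} {t : UTidx n → ℝ} {R : ℝ} :
    normSq n s t < R ↔ ∑ p, (exp (sfull n s p.1.1) * t p) ^ 2 < R - Nfun n s := by
  simp only [normSq, mul_pow, ← Real.exp_nat_mul]
  push_cast
  rw [lt_sub_iff_add_lt']

theorem Nfun_le_normSq (s : Fin (n - 1) → ℝ) (t : UTidx n → ℝ) : Nfun n s ≤ normSq n s t :=
  le_add_of_nonneg_right (Finset.sum_nonneg fun _ _ ↦ by positivity)

theorem volume_normSq_lt {s : Fin (n - 1) → ℝ} {T : ℝ} (hN : Nfun n s < T ^ 2) :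
    volume {t | normSq n s t < T ^ 2} =
      ENNReal.ofReal ((T ^ 2 - Nfun n s) ^ (((n * (n - 1) : ℕ) : ℝ) / 4) *
        (π ^ (((n * (n - 1) : ℕ) : ℝ) / 4) / Gamma (1 + ((n * (n - 1) : ℕ) : ℝ) / 4)) /
          exp (deltafun n s)) := by
  have hdim : ((n * (n - 1) : ℕ) : ℝ) / 4 = (Fintype.card (UTidx n) : ℝ) / 2 := by
    rw [← UTidx.card_mul_two]
    push_cast
    ring
  simp_rw [normSq_lt_iff]
  rw [volume_sum_mul_sq_lt (fun _ ↦ exp_pos _) (sub_pos.2 hN), prod_exp_sfull_fst, hdim,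
    add_comm 1, mul_div_assoc]

theorem setLIntegral_exp_two_deltafun (C T : ℝ) :
    ∫⁻ x in {x : (Fin (n - 1) → ℝ) × (UTidx n → ℝ) |
        (∀ i, C < x.1 i) ∧ normSq n x.1 x.2 < T ^ 2}, ENNReal.ofReal (exp (2 * deltafun n x.1)) =
      ∫⁻ s in {s : Fin (n - 1) → ℝ | (∀ i, C < s i) ∧ Nfun n s < T ^ 2},
        ENNReal.ofReal (π ^ (((n * (n - 1) : ℕ) : ℝ) / 4) /
          Gamma (1 + ((n * (n - 1) : ℕ) : ℝ) / 4) *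
            ((T ^ 2 - Nfun n s) ^ (((n * (n - 1) : ℕ) : ℝ) / 4) * exp (deltafun n s))) := by
  set A := {s : Fin (n - 1) → ℝ | (∀ i, C < s i) ∧ Nfun n s < T ^ 2}
  have hS : MeasurableSet {x : (Fin (n - 1) → ℝ) × (UTidx n → ℝ) |
      (∀ i, C < x.1 i) ∧ normSq n x.1 x.2 < T ^ 2} := measurableSet_setOfPred.2 (by fun_prop)
  have hA : MeasurableSet A := measurableSet_setOfPred.2 (by fun_prop)
  rw [Measure.volume_eq_prod, setLIntegral_prod_comp_fst hS
    (g := fun s ↦ ENNReal.ofReal (exp (2 * deltafun n s))) (by fun_prop),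
    ← lintegral_indicator hA]
  refine lintegral_congr fun s ↦ ?_
  by_cases hs : s ∈ A
  · have hfiber : {t | (∀ i, C < s i) ∧ normSq n s t < T ^ 2} = {t | normSq n s t < T ^ 2} := by
      simp only [hs.1, implies_true, true_and]
    rw [Set.preimage_ofPred_eq, hfiber, volume_normSq_lt hs.2,
      ← ENNReal.ofReal_mul (exp_pos _).le, Set.indicator_of_mem hs]
    congr 1
    rw [two_mul, exp_add]
    field_simp
  · have hfiber : {t | (∀ i, C < s i) ∧ normSq n s t < T ^ 2} = ∅ :=
      Set.eq_empty_of_forall_notMem fun t ht ↦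
        hs ⟨ht.1, (Nfun_le_normSq s t).trans_lt ht.2⟩
    rw [Set.preimage_ofPred_eq, hfiber, measure_empty, mul_zero, Set.indicator_of_notMem hs]

end Coordinates

theorem lattice_action_lem_BTC_general (n : ℕ) (C T : ℝ) :
    (∫ x in {x : (Fin (n - 1) → ℝ) × (UTidx n → ℝ) |
        (∀ i, C < x.1 i) ∧ normSq n x.1 x.2 < T ^ 2},
      Real.exp (2 * deltafun n x.1)) =
    (Real.pi ^ (((n * (n - 1) : ℕ) : ℝ) / 4) / Real.Gamma (1 + ((n * (n - 1) : ℕ) : ℝ) / 4)) *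
      ∫ s in {s : Fin (n - 1) → ℝ | (∀ i, C < s i) ∧ Nfun n s < T ^ 2},
        (T ^ 2 - Nfun n s) ^ (((n * (n - 1) : ℕ) : ℝ) / 4) * Real.exp (deltafun n s) := by
  rw [← integral_const_mul, integral_eq_lintegral_of_nonneg_ae, integral_eq_lintegral_of_nonneg_ae,
    setLIntegral_exp_two_deltafun]
  · refine ae_restrict_of_forall_mem (measurableSet_setOfPred.2 (by fun_prop)) fun s hs ↦ ?_
    have hR : 0 ≤ T ^ 2 - Nfun n s := (sub_pos.2 hs.2).le
    positivity
  · fun_prop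
  · exact Eventually.of_forall fun x ↦ (exp_pos _).le
  · exact Measurable.aestronglyMeasurable (by fun_prop)

/-- `ϱ(B_T^C) = c_n ∫_{A_T^C} (T² - N(s))^{n(n-1)/4} e^{Σ (n-k) s_k} ds`,
where `c_n = π^{n(n-1)/4} / Γ(1 + n(n-1)/4)`. -/
theorem lattice_action_lem_BTC (n : ℕ) (hn : 2 ≤ n) (C T : ℝ) (hT : 0 < T) :
    (∫ x in {x : (Fin (n - 1) → ℝ) × (UTidx n → ℝ) |
        (∀ i, C < x.1 i) ∧ normSq n x.1 x.2 < T ^ 2},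
      Real.exp (2 * deltafun n x.1)) =
    (Real.pi ^ (((n * (n - 1) : ℕ) : ℝ) / 4) / Real.Gamma (1 + ((n * (n - 1) : ℕ) : ℝ) / 4)) *
      ∫ s in {s : Fin (n - 1) → ℝ | (∀ i, C < s i) ∧ Nfun n s < T ^ 2},
        (T ^ 2 - Nfun n s) ^ (((n * (n - 1) : ℕ) : ℝ) / 4) * Real.exp (deltafun n s) :=
  lattice_action_lem_BTC_general n C T
end

section
/- With notation as above, for each i₀ ∈ {1,…,n-1} let B_T^{i₀} = {a(s)n(t) ∈ B° : ‖a(s)n(t)‖ < T, s_{i₀} ≤ C}. Then there is a constant c > 0 (depending on n and C) with ϱ(B_T^{i₀}) ≤ c · T^{n(n-1) - (n - i₀)} for all T > 1. -/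
open MeasureTheory Real Filter Set

/-! For fixed `s`, the `t`-fibre of `{‖a(s)n(t)‖ < T}` lies in the box
`|t_{ij}| < T e^{-s_i}`, of volume `(2T)^{n(n-1)/2} e^{-δ(s)}` because `Σ_{i<j} s_i = δ(s)`.
Hence the `t`-integral of `e^{2δ(s)}` is at most `(2T)^{n(n-1)/2} e^{δ(s)}`. On the region
every `s_i < log T` and `s_{i₀} ≤ C`, and `δ(s) = Σ (n - i) s_i` has positive coefficients, so
the remaining integral over this orthant is `∏ e^{(n-i) b_i} / (n - i)` with `b_i = log T` for
`i ≠ i₀` and `b_{i₀} = C`, i.e. a constant times `T^{n(n-1)/2 - (n - i₀)}`. -/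

open scoped ENNReal

theorem setLIntegral_pi_Iic_exp_sum {ι : Type*} [Fintype ι] {c : ι → ℝ} (hc : ∀ i, 0 < c i)
    (b : ι → ℝ) :
    ∫⁻ s in univ.pi fun i => Iic (b i), ENNReal.ofReal (exp (∑ i, c i * s i)) =
      ENNReal.ofReal (∏ i, exp (c i * b i) / c i) := by
  have hint : ∀ i, Integrable (fun x => exp (c i * x)) (volume.restrict (Iic (b i))) :=
    fun i => integrableOn_exp_mul_Iic (hc i) (b i)
  simp_rw [volume_pi, Measure.restrict_pi_pi, exp_sum]
  rw [← ofReal_integral_eq_lintegral_ofReal (Integrable.fintype_prod hint)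
    (ae_of_all _ fun s => by positivity), integral_fintype_prod_eq_prod fun i x => exp (c i * x)]
  simp_rw [integral_exp_mul_Iic (hc _)]

theorem setLIntegral_prod_fst {α β : Type*} [MeasurableSpace α] [MeasurableSpace β]
    {μ : Measure α} {ν : Measure β} [SFinite ν] {S : Set (α × β)} (hS : MeasurableSet S)
    {f : α → ℝ≥0∞} (hf : Measurable f) :
    ∫⁻ z in S, f z.1 ∂μ.prod ν = ∫⁻ x, f x * ν (Prod.mk x ⁻¹' S) ∂μ := by
  have hf₁ : Measurable fun z : α × β => f z.1 := hf.comp measurable_fst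
  rw [← lintegral_indicator hS, lintegral_prod _ (hf₁.indicator hS).aemeasurable]
  refine lintegral_congr fun x => ?_
  rw [← lintegral_indicator_const (measurable_prodMk_left hS)]
  rfl

theorem volume_sum_exp_mul_sq_lt_le {ι : Type*} [Fintype ι] (u : ι → ℝ) {T : ℝ}
    (hT : 0 ≤ T) :
    volume {t : ι → ℝ | ∑ i, exp (2 * u i) * t i ^ 2 < T ^ 2} ≤
      ENNReal.ofReal ((2 * T) ^ Fintype.card ι * exp (-∑ i, u i)) := by
  have hbox : {t : ι → ℝ | ∑ i, exp (2 * u i) * t i ^ 2 < T ^ 2} ⊆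
      univ.pi fun i => Ioo (-(T * exp (-u i))) (T * exp (-u i)) := by
    intro t ht i _
    have hterm : exp (2 * u i) * t i ^ 2 < T ^ 2 := lt_of_le_of_lt
      (Finset.single_le_sum (f := fun j => exp (2 * u j) * t j ^ 2)
        (fun j _ => by positivity) (Finset.mem_univ i)) ht
    have : (exp (u i) * |t i|) ^ 2 < T ^ 2 := by
      rwa [mul_pow, sq_abs, ← exp_nat_mul, Nat.cast_ofNat]
    have : |t i| < T * exp (-u i) := by
      rw [exp_neg, ← div_eq_mul_inv, lt_div_iff₀ (exp_pos _), mul_comm]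
      exact lt_of_pow_lt_pow_left₀ 2 hT this
    exact abs_lt.1 this
  calc _ ≤ volume (univ.pi fun i => Ioo (-(T * exp (-u i))) (T * exp (-u i))) :=
        measure_mono hbox
    _ = ∏ i, ENNReal.ofReal (2 * T * exp (-u i)) := by
      simp_rw [volume_pi_pi, Real.volume_Ioo]; congr! 2; ring
    _ = _ := by
      rw [← ENNReal.ofReal_prod_of_nonneg (fun i _ => by positivity), Finset.prod_mul_distrib,
        Finset.prod_const, ← exp_sum, Finset.sum_neg_distrib, Finset.card_univ]

theorem sum_mul_update_const {ι : Type*} [Fintype ι] [DecidableEq ι] (c : ι → ℝ) (i₀ : ι)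
    (a L : ℝ) :
    ∑ i, c i * Function.update (fun _ => L) i₀ a i = c i₀ * a + (∑ i, c i - c i₀) * L := by
  rw [← Finset.add_sum_erase _ _ (Finset.mem_univ i₀), Function.update_self,
    Finset.sum_congr rfl fun i hi => by
      rw [Function.update_of_ne (Finset.ne_of_mem_erase hi)],
    ← Finset.sum_mul, Finset.sum_erase_eq_sub (Finset.mem_univ _)]

theorem UTidx.sum_fst {M : Type*} [AddCommMonoid M] {n : ℕ} (f : Fin n → M) :
    ∑ p : UTidx n, f p.1.1 = ∑ k : Fin n, (n - 1 - k) • f k := by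
  classical
  rw [show ∑ p : UTidx n, f p.1.1 =
      ∑ q ∈ Finset.univ.filter (fun q : Fin n × Fin n => q.1 < q.2), f q.1 from
      (Finset.sum_subtype _ (fun _ => by simp) (fun q : Fin n × Fin n => f q.1)).symm,
    Finset.sum_filter, Fintype.sum_prod_type]
  refine Finset.sum_congr rfl fun k _ => ?_
  rw [← Finset.sum_filter]
  dsimp only
  rw [Finset.sum_const, Finset.filter_lt_eq_Ioi, Fin.card_Ioi]

theorem UTidx.card_mul_two_s4 (n : ℕ) : Fintype.card (UTidx n) * 2 = n * (n - 1) := by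
  rw [Fintype.card_eq_sum_ones, UTidx.sum_fst (fun _ => 1)]
  simp only [smul_eq_mul, mul_one]
  rw [Fin.sum_univ_eq_sum_range (fun k => n - 1 - k), Finset.sum_range_reflect (fun k => k),
    Finset.sum_range_id_mul_two]

theorem sfull_of_lt {n : ℕ} (s : Fin (n - 1) → ℝ) {k : Fin n} (hk : (k : ℕ) < n - 1) :
    sfull n s k = s ⟨k, hk⟩ := dif_pos hk

theorem continuous_sfull_s4 (n : ℕ) : Continuous (sfull n) :=
  continuous_pi fun k => by unfold sfull; split_ifs <;> fun_prop

theorem continuous_normSq (n : ℕ) :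
    Continuous fun x : (Fin (n - 1) → ℝ) × (UTidx n → ℝ) => normSq n x.1 x.2 := by
  have := continuous_sfull_s4 n
  unfold normSq Nfun; fun_prop

theorem continuous_deltafun (n : ℕ) : Continuous (deltafun n) := by
  have := continuous_sfull_s4 n
  unfold deltafun; fun_prop

theorem deltafun_eq_sum_UTidx {n : ℕ} (s : Fin (n - 1) → ℝ) :
    deltafun n s = ∑ p : UTidx n, sfull n s p.1.1 := by
  rw [UTidx.sum_fst, deltafun]
  refine Finset.sum_congr rfl fun k _ => ?_
  rw [nsmul_eq_mul, Nat.sub_sub, Nat.cast_sub (by omega)]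
  push_cast; ring

def deltaCoeff (n : ℕ) (i : Fin (n - 1)) : ℝ := n - ((i : ℕ) + 1)

theorem deltaCoeff_pos {n : ℕ} (i : Fin (n - 1)) : 0 < deltaCoeff n i := by
  have : (i : ℕ) + 1 < n := by omega
  unfold deltaCoeff; linarith [show ((i : ℕ) + 1 : ℝ) < n by exact_mod_cast this]

theorem deltafun_eq_sum {n : ℕ} (s : Fin (n - 1) → ℝ) :
    deltafun n s = ∑ i, deltaCoeff n i * s i := by
  obtain _ | m := n
  · simp [deltafun]
  rw [deltafun, Fin.sum_univ_castSucc]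
  simp [deltaCoeff, sfull_of_lt]

theorem sum_deltaCoeff (n : ℕ) : ∑ i, deltaCoeff n i = Fintype.card (UTidx n) := by
  -- evaluate both formulas for `δ` at `s = 1`; `sfull n 1` is `1` at every row index
  -- `p.1 < n - 1`
  have := deltafun_eq_sum (n := n) fun _ => 1
  simp only [mul_one] at this
  rw [← this, deltafun_eq_sum_UTidx, Fintype.card_eq_sum_ones, Nat.cast_sum, Nat.cast_one]
  exact Finset.sum_congr rfl fun p _ => sfull_of_lt _ (by have := p.2; omega)

theorem exp_two_mul_le_normSq {n : ℕ} (s : Fin (n - 1) → ℝ) (t : UTidx n → ℝ)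
    (i : Fin (n - 1)) :
    exp (2 * s i) ≤ normSq n s t := by
  have hi : exp (2 * s i) ≤ Nfun n s := by
    simpa [Nfun, sfull_of_lt] using
      Finset.single_le_sum (f := fun k => exp (2 * sfull n s k)) (fun k _ => (exp_pos _).le)
        (Finset.mem_univ (Fin.castLE (Nat.sub_le n 1) i))
  have ht : 0 ≤ ∑ p : UTidx n, exp (2 * sfull n s p.1.1) * t p ^ 2 := by positivity
  unfold normSq; linarith

theorem lt_log_of_normSq_lt {n : ℕ} {s : Fin (n - 1) → ℝ} {t : UTidx n → ℝ} {T : ℝ}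
    (h : normSq n s t < T ^ 2) (hT : 0 < T) (i : Fin (n - 1)) : s i < log T := by
  rw [← exp_lt_exp, exp_log hT]
  refine lt_of_pow_lt_pow_left₀ 2 hT.le ?_
  rw [← exp_nat_mul, Nat.cast_ofNat]
  exact (exp_two_mul_le_normSq s t i).trans_lt h

theorem volume_normSq_lt_le {n : ℕ} (s : Fin (n - 1) → ℝ) {T : ℝ} (hT : 0 ≤ T) :
    volume {t | normSq n s t < T ^ 2} ≤
      ENNReal.ofReal ((2 * T) ^ Fintype.card (UTidx n) * exp (-deltafun n s)) := by
  rw [deltafun_eq_sum_UTidx]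
  refine (measure_mono fun t (ht : normSq n s t < T ^ 2) => ?_).trans
    (volume_sum_exp_mul_sq_lt_le _ hT)
  have : 0 ≤ Nfun n s := by unfold Nfun; positivity
  exact (le_add_of_nonneg_left this).trans_lt ht

section Slice

variable {n : ℕ} (C : ℝ) (i₀ : Fin (n - 1)) {T : ℝ}

theorem mem_pi_Iic_of_normSq_lt {s : Fin (n - 1) → ℝ} {t : UTidx n → ℝ}
    (h : normSq n s t < T ^ 2 ∧ s i₀ ≤ C) (hT : 0 < T) :
    s ∈ univ.pi fun i => Iic (Function.update (fun _ => log T) i₀ C i) := by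
  intro i _
  rcases eq_or_ne i i₀ with rfl | hi
  · simpa using h.2
  · simpa [hi] using (lt_log_of_normSq_lt h.1 hT i).le

theorem setLIntegral_slice_le (hT : 0 < T) :
    ∫⁻ x in {x : (Fin (n - 1) → ℝ) × (UTidx n → ℝ) |
        normSq n x.1 x.2 < T ^ 2 ∧ x.1 i₀ ≤ C}, ENNReal.ofReal (exp (2 * deltafun n x.1)) ≤
      ENNReal.ofReal ((2 * T) ^ Fintype.card (UTidx n) *
        ∏ i, exp (deltaCoeff n i * Function.update (fun _ => log T) i₀ C i) /
          deltaCoeff n i) := by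
  set S := {x : (Fin (n - 1) → ℝ) × (UTidx n → ℝ) |
    normSq n x.1 x.2 < T ^ 2 ∧ x.1 i₀ ≤ C}
  set B := univ.pi fun i => Iic (Function.update (fun _ => log T) i₀ C i)
  set K := ENNReal.ofReal ((2 * T) ^ Fintype.card (UTidx n))
  have hS : MeasurableSet S :=
    (measurableSet_lt (continuous_normSq n).measurable measurable_const).inter
      (measurableSet_le ((measurable_pi_apply i₀).comp measurable_fst) measurable_const)
  have hB : MeasurableSet B := MeasurableSet.univ_pi fun _ => measurableSet_Iic
  have hslice (s : Fin (n - 1) → ℝ) :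
      ENNReal.ofReal (exp (2 * deltafun n s)) * volume (Prod.mk s ⁻¹' S) ≤
        B.indicator (fun s => K * ENNReal.ofReal (exp (∑ i, deltaCoeff n i * s i))) s := by
    by_cases hs : s ∈ B
    · rw [indicator_of_mem hs, ← deltafun_eq_sum, ← ENNReal.ofReal_mul (by positivity)]
      calc _ ≤ ENNReal.ofReal (exp (2 * deltafun n s)) *
            ENNReal.ofReal ((2 * T) ^ Fintype.card (UTidx n) * exp (-deltafun n s)) := by
            gcongr
            exact (measure_mono fun t ht => ht.1).trans (volume_normSq_lt_le s hT.le)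
        _ = _ := by
          rw [← ENNReal.ofReal_mul (by positivity), mul_left_comm, ← exp_add]
          ring_nf
    · have : Prod.mk s ⁻¹' S = ∅ :=
        eq_empty_of_forall_notMem fun t ht => hs (mem_pi_Iic_of_normSq_lt C i₀ ht hT)
      simp [this]
  have hf : Measurable fun s => ENNReal.ofReal (exp (2 * deltafun n s)) := by
    have := continuous_deltafun n; fun_prop
  rw [Measure.volume_eq_prod, setLIntegral_prod_fst hS hf]
  calc _ ≤ ∫⁻ s in B, K * ENNReal.ofReal (exp (∑ i, deltaCoeff n i * s i)) := by
        rw [← lintegral_indicator hB]; exact lintegral_mono hslice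
    _ = _ := by
      rw [lintegral_const_mul' _ _ ENNReal.ofReal_ne_top,
        setLIntegral_pi_Iic_exp_sum (fun i => deltaCoeff_pos i),
        ← ENNReal.ofReal_mul (by positivity)]

theorem slice_bound_eq_const_mul_rpow (hT : 0 < T) :
    (2 * T) ^ Fintype.card (UTidx n) *
        ∏ i, exp (deltaCoeff n i * Function.update (fun _ => log T) i₀ C i) / deltaCoeff n i =
      2 ^ Fintype.card (UTidx n) * exp (deltaCoeff n i₀ * C) * (∏ i, (deltaCoeff n i)⁻¹) *
        T ^ (((n * (n - 1) : ℕ) : ℝ) - deltaCoeff n i₀) := by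
  have hd : ((n * (n - 1) : ℕ) : ℝ) - deltaCoeff n i₀ =
      Fintype.card (UTidx n) + (Fintype.card (UTidx n) - deltaCoeff n i₀) := by
    rw [← UTidx.card_mul_two_s4]; push_cast; ring
  rw [Finset.prod_div_distrib, ← exp_sum, sum_mul_update_const, sum_deltaCoeff, hd,
    rpow_add hT, rpow_natCast, rpow_def_of_pos hT, exp_add, Finset.prod_inv_distrib, mul_pow]
  ring_nf

end Slice

-- `i₀` is zero-based: the paper's index is `i₀ + 1`.
theorem lattice_action_lem_BTC2_slice_general (n : ℕ) (C : ℝ) (i₀ : Fin (n - 1)) :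
    ∃ c : ℝ, 0 < c ∧ ∀ T : ℝ, 1 < T →
      (∫ x in {x : (Fin (n - 1) → ℝ) × (UTidx n → ℝ) |
          normSq n x.1 x.2 < T ^ 2 ∧ x.1 i₀ ≤ C},
        Real.exp (2 * deltafun n x.1)) ≤
      c * T ^ (((n * (n - 1) : ℕ) : ℝ) - ((n : ℝ) - ((i₀ : ℕ) + 1))) := by
  have hprod : 0 < ∏ i, (deltaCoeff n i)⁻¹ :=
    Finset.prod_pos fun i _ => inv_pos.2 (deltaCoeff_pos i)
  refine ⟨2 ^ Fintype.card (UTidx n) * exp (deltaCoeff n i₀ * C) * ∏ i, (deltaCoeff n i)⁻¹,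
    by positivity, fun T hT => ?_⟩
  have hT0 : 0 < T := one_pos.trans hT
  rw [integral_eq_lintegral_of_nonneg_ae (ae_of_all _ fun _ => (exp_pos _).le)
    (by have := continuous_deltafun n; fun_prop)]
  refine ENNReal.toReal_le_of_le_ofReal (by positivity) ?_
  exact (setLIntegral_slice_le C i₀ hT0).trans_eq
    (by rw [slice_bound_eq_const_mul_rpow C i₀ hT0]; rfl)

/-- For `i₀ ∈ {1,…,n-1}` (here `i₀ : Fin (n-1)`, zero-based, so the
paper's `i₀` is `(i₀ : ℕ) + 1`), with `B_T^{i₀} = {a(s)n(t) ∈ B° : ‖a(s)n(t)‖ < T, s_{i₀} ≤ C}`,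
there is `c > 0` with `ϱ(B_T^{i₀}) ≤ c T^{n(n-1) - (n - i₀)}` for all `T > 1`. -/
theorem lattice_action_lem_BTC2_slice (n : ℕ) (hn : 2 ≤ n) (C : ℝ) (i₀ : Fin (n - 1)) :
    ∃ c : ℝ, 0 < c ∧ ∀ T : ℝ, 1 < T →
      (∫ x in {x : (Fin (n - 1) → ℝ) × (UTidx n → ℝ) |
          normSq n x.1 x.2 < T ^ 2 ∧ x.1 i₀ ≤ C},
        Real.exp (2 * deltafun n x.1)) ≤
      c * T ^ (((n * (n - 1) : ℕ) : ℝ) - ((n : ℝ) - ((i₀ : ℕ) + 1))) :=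
  lattice_action_lem_BTC2_slice_general n C i₀
end

section
/- Let π be a representation of a group H on a finite-dimensional vector space V, and write V = V₀ ⊕ V₁ where V₀ is the subspace of H-fixed vectors and V₁ is an H-invariant complement; let Π : V → V₁ be the corresponding projection. If x ∈ V is such that the orbit π(H)x is discrete (and closed) in V, then Π(π(H)x) = π(H)(Π x) is discrete in V₁. -/
open Filter Topology

/-- Let `π` be a representation of a group `H` on a finite-dimensional normed
vector space `V = V₀ ⊕ V₁`, where `V₀` is the subspace of `H`-fixed vectors and `V₁` an
`H`-invariant complement, with projection `Π` onto `V₁` along `V₀`.  If the orbit `π(H)x` is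
discrete (every convergent sequence in it is eventually constant), then so is `Π(π(H)x)`. -/
theorem lattice_action_lem_diverge00 {V : Type*} [NormedAddCommGroup V] [NormedSpace ℝ V]
    [FiniteDimensional ℝ V] {H : Type*} [Group H]
    (π : H →* (V →ₗ[ℝ] V)) (P : V →ₗ[ℝ] V)
    (hproj : P ∘ₗ P = P)
    (hker : ∀ v : V, P v = 0 ↔ ∀ h : H, π h v = v)
    (hequiv : ∀ (h : H) (v : V), P (π h v) = π h (P v))
    (x : V)
    (hdisc : ∀ (u : ℕ → H) (y : V),
      Tendsto (fun k => π (u k) x) atTop (nhds y) →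
      ∃ K : ℕ, ∀ k ≥ K, π (u k) x = π (u K) x) :
    ∀ (u : ℕ → H) (y : V),
      Tendsto (fun k => π (u k) (P x)) atTop (nhds y) →
      ∃ K : ℕ, ∀ k ≥ K, π (u k) (P x) = π (u K) (P x) := by
  intro u y hy
  have hPP : P (P x) = P x := by
    have := congrArg (fun f : V →ₗ[ℝ] V => f x) hproj
    simpa using this
  have hfix : ∀ h : H, π h (x - P x) = x - P x := by
    refine (hker (x - P x)).mp ?_
    simp [map_sub, hPP]
  have hsplit : ∀ h : H, π h x = (x - P x) + π h (P x) := by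
    intro h
    have : π h x = π h (x - P x) + π h (P x) := by
      rw [← map_add, sub_add_cancel]
    rw [this, hfix h]
  have hconv : Tendsto (fun k => π (u k) x) atTop (nhds ((x - P x) + y)) := by
    simp only [hsplit]
    exact tendsto_const_nhds.add hy
  obtain ⟨K, hK⟩ := hdisc u ((x - P x) + y) hconv
  refine ⟨K, fun k hk => ?_⟩
  have := hK k hk
  rw [hsplit, hsplit] at this
  exact add_left_cancel this
end

section
/- Let u ∈ N be a unipotent upper-triangular matrix in SL(n,ℝ) whose only nonzero off-diagonal entries lie in the last column (entries u_{in}, i < n), and let a(s) = diag(e^{s₁},…,e^{s_n}) with Σsᵢ = 0. Set u(s) = a(-s)·u·a(-s)^{-1} = a(s)^{-1}u a(s). Then for all unipotent upper triangular n ∈ N, |‖a(s)·u(s)·n‖ − ‖a(s)·n‖| ≤ e^{s_n}·‖u‖, where ‖g‖ = (Σ g_{ij}²)^{1/2}. -/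
open Set

noncomputable section

/-- The Hilbert–Schmidt (Frobenius) norm `‖x‖ = (Σ x_{ij}²)^{1/2}`. -/
def hsNorm (n : ℕ) (x : Matrix (Fin n) (Fin n) ℝ) : ℝ :=
  Real.sqrt (∑ i, ∑ j, (x i j) ^ 2)

section Aux

attribute [local instance] Matrix.frobeniusSeminormedAddCommGroup

lemma hsNorm_eq_norm (n : ℕ) (x : Matrix (Fin n) (Fin n) ℝ) : hsNorm n x = ‖x‖ := by
  rw [Matrix.frobenius_norm_def, hsNorm, Real.sqrt_eq_rpow]
  congr 1
  refine Finset.sum_congr rfl fun i _ => Finset.sum_congr rfl fun j _ => ?_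
  rw [Real.norm_eq_abs, show (2 : ℝ) = ((2 : ℕ) : ℝ) by norm_num, Real.rpow_natCast, sq_abs]

lemma hsNorm_triangle (n : ℕ) (X Y : Matrix (Fin n) (Fin n) ℝ) :
    |hsNorm n (X + Y) - hsNorm n X| ≤ hsNorm n Y := by
  simp only [hsNorm_eq_norm]
  simpa using abs_norm_sub_norm_le (X + Y) X

end Aux

/-- Let `u` be unipotent upper triangular with nonzero off-diagonal
entries only in the last column, `a(s) = diag(e^{s₁},…,e^{sₙ})` with `Σ sᵢ = 0`, and
`u(s) = a(s)⁻¹ u a(s)`. Then for every unipotent upper triangular `ν`,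
`|‖a(s) u(s) ν‖ - ‖a(s) ν‖| ≤ e^{sₙ} ‖u‖`. -/
theorem lattice_action_last_column_perturbation (n : ℕ) (hn : 2 ≤ n)
    (u ν : Matrix (Fin n) (Fin n) ℝ) (s : Fin n → ℝ) (hs : ∑ i, s i = 0)
    (hu_diag : ∀ i, u i i = 1)
    (hu_off : ∀ i j : Fin n, i ≠ j → j ≠ ⟨n - 1, by omega⟩ → u i j = 0)
    (hu_upper : ∀ i j : Fin n, j < i → u i j = 0)
    (hν_diag : ∀ i, ν i i = 1)
    (hν_upper : ∀ i j : Fin n, j < i → ν i j = 0) :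
    |hsNorm n (Matrix.diagonal (fun i => Real.exp (s i)) *
        (Matrix.diagonal (fun i => Real.exp (-(s i))) * u *
          Matrix.diagonal (fun i => Real.exp (s i))) * ν)
      - hsNorm n (Matrix.diagonal (fun i => Real.exp (s i)) * ν)|
    ≤ Real.exp (s ⟨n - 1, by omega⟩) * hsNorm n u := by
  have hlt : n - 1 < n := by omega
  set last : Fin n := ⟨n - 1, hlt⟩ with hlast_def
  have hle : ∀ j : Fin n, j ≤ last := fun j => by
    have := j.isLt
    simp only [Fin.le_def, hlast_def]
    omega
  set D : Matrix (Fin n) (Fin n) ℝ := Matrix.diagonal (fun i => Real.exp (s i)) with hD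
  set D' : Matrix (Fin n) (Fin n) ℝ := Matrix.diagonal (fun i => Real.exp (-(s i))) with hD'
  set w : Matrix (Fin n) (Fin n) ℝ := u - 1 with hw
  -- Step 1: simplify the product
  have h1 : D * (D' * u * D) * ν = u * (D * ν) := by
    rw [hD, hD', Matrix.mul_assoc (Matrix.diagonal _) u (Matrix.diagonal _),
      ← Matrix.mul_assoc (Matrix.diagonal _) (Matrix.diagonal _) _,
      Matrix.diagonal_mul_diagonal]
    simp [← Real.exp_add, Matrix.mul_assoc]
  have h2 : u * (D * ν) = D * ν + w * (D * ν) := by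
    rw [hw, Matrix.sub_mul, Matrix.one_mul]
    abel
  -- entries of w
  have hwentry : ∀ i k : Fin n, w i k = if k = last ∧ i ≠ last then u i k else 0 := by
    intro i k
    rcases eq_or_ne i k with rfl | hik
    · simp only [hw, Matrix.sub_apply, Matrix.one_apply_eq, hu_diag, sub_self]
      rcases eq_or_ne i last with rfl | h
      · simp
      · simp [h]
    · have hone : (1 : Matrix (Fin n) (Fin n) ℝ) i k = 0 := Matrix.one_apply_ne hik
      simp only [hw, Matrix.sub_apply, hone, sub_zero]
      rcases eq_or_ne k last with rfl | hk
      · have : i ≠ last := hik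
        simp [this]
      · rw [hu_off i k hik hk]
        simp [hk]
  have hwlastlast : w last last = 0 := by rw [hwentry]; simp
  -- entries of the perturbation Y = w * (D * ν)
  have hY : ∀ i j : Fin n, (w * (D * ν)) i j =
      if j = last then w i last * Real.exp (s last) else 0 := by
    intro i j
    rw [Matrix.mul_apply]
    rw [Finset.sum_eq_single last]
    · have hDν : (D * ν) last j = Real.exp (s last) * ν last j := by
        rw [hD, Matrix.diagonal_mul]
      rw [hDν]
      rcases eq_or_ne j last with rfl | hj
      · simp [hν_diag, mul_comm]
      · have hjlt : j < last := lt_of_le_of_ne (hle j) hj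
        rw [hν_upper last j hjlt]
        simp [hj]
    · intro k _ hk
      rw [hwentry]
      simp [hk]
    · intro h
      exact absurd (Finset.mem_univ last) h
  -- norm of the perturbation
  have hYsum : ∑ i, ∑ j, ((w * (D * ν)) i j) ^ 2
      = Real.exp (s last) ^ 2 * ∑ i, (w i last) ^ 2 := by
    rw [Finset.mul_sum]
    refine Finset.sum_congr rfl fun i _ => ?_
    rw [Finset.sum_eq_single last]
    · rw [hY]; simp; ring
    · intro k _ hk
      rw [hY]
      simp [hk]
    · intro h
      exact absurd (Finset.mem_univ last) h
  have hcol_le : ∑ i, (w i last) ^ 2 ≤ ∑ i, ∑ j, (u i j) ^ 2 := by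
    refine Finset.sum_le_sum fun i _ => ?_
    rcases eq_or_ne i last with rfl | hi
    · rw [hwlastlast]
      simpa using Finset.sum_nonneg fun j (_ : j ∈ Finset.univ) => sq_nonneg _
    · have : w i last = u i last := by rw [hwentry]; simp [hi]
      rw [this]
      exact Finset.single_le_sum (f := fun j => (u i j) ^ 2) (fun j _ => sq_nonneg _) (Finset.mem_univ last)
  have hYnorm : hsNorm n (w * (D * ν)) ≤ Real.exp (s last) * hsNorm n u := by
    rw [hsNorm, hYsum, Real.sqrt_mul (sq_nonneg _),
      Real.sqrt_sq (Real.exp_pos _).le, hsNorm]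
    exact mul_le_mul_of_nonneg_left (Real.sqrt_le_sqrt hcol_le) (Real.exp_pos _).le
  calc |hsNorm n (D * (D' * u * D) * ν) - hsNorm n (D * ν)|
      = |hsNorm n (D * ν + w * (D * ν)) - hsNorm n (D * ν)| := by rw [h1, h2]
    _ ≤ hsNorm n (w * (D * ν)) := hsNorm_triangle n _ _
    _ ≤ Real.exp (s last) * hsNorm n u := hYnorm

end
end

section
/- Let ϱ be the right Haar measure and λ the left Haar measure on B°, with λ the pushforward of ds dt under (s,t) ↦ a(s)n(t) and ϱ(f) = ∫ f(b^{-1}) dλ(b) = ∫ f(a(s)n(t)) e^{2δ(s)} ds dt. For SL(2,ℝ), with B̂^C = {a(s)n(t) : s₁ < C} and B_T° = {b ∈ B° : ‖b‖ < T}, one has λ(B_T° \ B̂_T^C) = o(λ(B_T°)) as T → ∞, for every C ∈ ℝ. -/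
/-!
In the coordinates `p = (s, t)`, `‖a(s)n(t)‖ < T` forces `|t| < T e^{-s}`, so the part of `B_T°`
with `s ≥ C` has area at most `2 T e^{-C}`, linear in `T`. On the other hand, where
`2/T < e^s < 4/T` the whole range `|t| < T²/8` lies in `B_T°`, so `λ(B_T°) ≥ (log 2 / 4) T²`.
-/

open MeasureTheory Real Filter Set
open scoped ENNReal

lemma ENNReal.toReal_div_toReal_le_div {a b : ℝ≥0∞} {x y : ℝ} (hx : 0 ≤ x) (hy : 0 < y)
    (ha : a ≤ .ofReal x) (hb : .ofReal y ≤ b) : a.toReal / b.toReal ≤ x / y := by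
  rcases eq_or_ne b ⊤ with rfl | hb_top
  · rw [toReal_top, _root_.div_zero]
    exact div_nonneg hx hy.le
  · exact div_le_div₀ hx (toReal_le_of_le_ofReal hx ha) hy
      ((ofReal_le_iff_le_toReal hb_top).1 hb)

lemma volume_le_fst_abs_snd_lt (C : ℝ) {T : ℝ} (hT : 0 ≤ T) :
    volume {p : ℝ × ℝ | C ≤ p.1 ∧ |p.2| < T * exp (-p.1)} =
      ENNReal.ofReal (2 * T * exp (-C)) := by
  have hf : IntegrableOn (fun s => T * exp (-s)) (Ici C) :=
    ((integrableOn_Ici_iff_integrableOn_Ioi (f := fun s => exp (-s)) (b := C)).2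
      (by simpa using exp_neg_integrableOn_Ioi C one_pos)).const_mul T
  have hregion : {p : ℝ × ℝ | C ≤ p.1 ∧ |p.2| < T * exp (-p.1)} =
      regionBetween (fun s => -(T * exp (-s))) (fun s => T * exp (-s)) (Ici C) := by
    ext p
    simp [regionBetween, abs_lt, and_comm]
  rw [hregion, Measure.volume_eq_prod, volume_regionBetween_eq_integral
    (f := fun s => -(T * exp (-s))) hf.neg hf measurableSet_Ici
    fun s _ => neg_le_self (by positivity)]
  congr 1
  simp only [Pi.sub_apply, sub_neg_eq_add, ← two_mul, integral_Ici_eq_integral_Ioi]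
  rw [integral_const_mul, integral_const_mul, integral_exp_neg_Ioi]
  ring

/-- `‖a(s)n(t)‖²` at `p = (s, t)`. -/
noncomputable def anNormSq (p : ℝ × ℝ) : ℝ :=
  exp (2 * p.1) * (1 + p.2 ^ 2) + exp (-(2 * p.1))

lemma abs_snd_lt_of_anNormSq_lt {T : ℝ} (hT : 0 ≤ T) {p : ℝ × ℝ} (h : anNormSq p < T ^ 2) :
    |p.2| < T * exp (-p.1) := by
  have hexp : exp (2 * p.1) = exp p.1 ^ 2 := by rw [sq, ← exp_add, two_mul]
  have hsq : (exp p.1 * |p.2|) ^ 2 < T ^ 2 := by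
    rw [mul_pow, sq_abs, ← hexp]
    unfold anNormSq at h
    nlinarith [exp_pos (2 * p.1), exp_pos (-(2 * p.1))]
  have hlt : exp p.1 * |p.2| < T := lt_of_pow_lt_pow_left₀ 2 hT hsq
  rw [exp_neg, ← div_eq_mul_inv, lt_div_iff₀ (exp_pos _)]
  linarith

lemma volume_anNormSq_lt_sq_le_fst_le (C : ℝ) {T : ℝ} (hT : 0 ≤ T) :
    volume {p | anNormSq p < T ^ 2 ∧ C ≤ p.1} ≤ ENNReal.ofReal (2 * T * exp (-C)) := by
  rw [← volume_le_fst_abs_snd_lt C hT]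
  exact measure_mono fun p ⟨hp, hC⟩ => ⟨hC, abs_snd_lt_of_anNormSq_lt hT hp⟩

lemma anNormSq_lt_sq_of_mem_box {T : ℝ} (hT : 4 ≤ T) {p : ℝ × ℝ}
    (hp : p ∈ Ioo (log (2 / T)) (log (4 / T)) ×ˢ Ioo (-(T ^ 2 / 8)) (T ^ 2 / 8)) :
    anNormSq p < T ^ 2 := by
  obtain ⟨⟨hs₁, hs₂⟩, ht⟩ := hp
  have hT0 : 0 < T := by linarith
  set x := exp p.1
  set y := exp (-p.1)
  rw [log_lt_iff_lt_exp (by positivity), div_lt_iff₀ hT0] at hs₁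
  rw [lt_log_iff_exp_lt (by positivity), lt_div_iff₀ hT0] at hs₂
  have hxy : x * y = 1 := by rw [← exp_add, add_neg_cancel, exp_zero]
  have hx : x < 1 := by nlinarith [exp_pos p.1]
  have hy : y < T / 2 := by nlinarith [exp_pos p.1, exp_pos (-p.1)]
  have ht2 : p.2 ^ 2 < (T ^ 2 / 8) ^ 2 := sq_lt_sq' ht.1 ht.2
  have hxt : x ^ 2 * p.2 ^ 2 < T ^ 2 / 4 := by
    calc x ^ 2 * p.2 ^ 2 ≤ x ^ 2 * (T ^ 2 / 8) ^ 2 := by gcongr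
      _ = (x * T) ^ 2 * T ^ 2 / 64 := by ring
      _ < 4 ^ 2 * T ^ 2 / 64 := by gcongr
      _ = T ^ 2 / 4 := by ring
  have hexp : exp (2 * p.1) = x ^ 2 := by rw [sq, ← exp_add, two_mul]
  have hexp' : exp (-(2 * p.1)) = y ^ 2 := by rw [sq, ← exp_add]; ring_nf
  unfold anNormSq
  rw [hexp, hexp']
  nlinarith [exp_pos p.1, exp_pos (-p.1)]

lemma ofReal_le_volume_anNormSq_lt_sq {T : ℝ} (hT : 4 ≤ T) :
    ENNReal.ofReal (log 2 / 4 * T ^ 2) ≤ volume {p | anNormSq p < T ^ 2} := by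
  have hT0 : 0 < T := by linarith
  have hbox : volume (Ioo (log (2 / T)) (log (4 / T)) ×ˢ Ioo (-(T ^ 2 / 8)) (T ^ 2 / 8)) =
      ENNReal.ofReal (log 2 / 4 * T ^ 2) := by
    rw [Measure.volume_eq_prod, Measure.prod_prod, volume_Ioo, volume_Ioo,
      ← ENNReal.ofReal_mul (sub_nonneg.2 (log_le_log (by positivity) (by gcongr; norm_num))),
      ← log_div (by positivity) (by positivity)]
    congr 1
    field_simp
    norm_num
    ring
  rw [← hbox]
  exact measure_mono fun p hp => anNormSq_lt_sq_of_mem_box hT hp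

/-- For `SL(2,ℝ)`, in the coordinates `b = a(s)n(t)` on `B°` (so that the
left Haar measure is `λ = ds dt` and `‖b‖² = e^{2s}(1+t²) + e^{-2s}`), for every `C ∈ ℝ`,
`λ(B_T° \ B̂_T^C) = o(λ(B_T°))` as `T → ∞`, where `B̂^C = {s < C}`. -/
theorem lattice_action_left_haar_concentration (C : ℝ) :
    Tendsto (fun T : ℝ =>
        (volume {p : ℝ × ℝ |
            Real.exp (2 * p.1) * (1 + p.2 ^ 2) + Real.exp (-(2 * p.1)) < T ^ 2 ∧
            C ≤ p.1}).toReal /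
        (volume {p : ℝ × ℝ |
            Real.exp (2 * p.1) * (1 + p.2 ^ 2) + Real.exp (-(2 * p.1)) < T ^ 2}).toReal)
      atTop (nhds 0) := by
  change Tendsto (fun T : ℝ => (volume {p | anNormSq p < T ^ 2 ∧ C ≤ p.1}).toReal /
    (volume {p | anNormSq p < T ^ 2}).toReal) atTop (nhds 0)
  have hbound : Tendsto (fun T : ℝ => 8 * exp (-C) / log 2 / T) atTop (nhds 0) :=
    tendsto_const_nhds.div_atTop tendsto_id
  refine squeeze_zero' (.of_forall fun T => by positivity) ?_ hbound
  filter_upwards [eventually_ge_atTop 4] with T hT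
  have hT0 : 0 < T := by linarith
  calc _ ≤ 2 * T * exp (-C) / (log 2 / 4 * T ^ 2) :=
        ENNReal.toReal_div_toReal_le_div (by positivity) (by positivity)
          (volume_anNormSq_lt_sq_le_fst_le C hT0.le) (ofReal_le_volume_anNormSq_lt_sq hT)
    _ = 8 * exp (-C) / log 2 / T := by field_simp; ring
end

section
/- Let 𝓘 = {(i₁,…,i_m) ∈ ℤ_{≥0}^m : Σi_k ≤ d} and choose s_I ∈ (0,1)^m for I ∈ 𝓘 with s_{I₁,k} ≠ s_{I₂,k} whenever I₁ ≠ I₂, for every coordinate k. Then the |𝓘|×|𝓘| matrix M = (s_I^J)_{I,J∈𝓘}, where s^J = ∏_k s_k^{j_k}, is invertible. -/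
/-!
If the matrix were singular, a nonzero polynomial `P = ∑_J v_J x^J` with `|J| ≤ d` would vanish at
every grid point `(σ_{i₁}, …, σ_{iₘ})`, `|I| ≤ d`. Such a `P` is zero, by induction on `m` and `d`:
restricted to the hyperplane `x₀ = σ₀`, `P` vanishes on the grid of the same degree in one
variable fewer, so `P = (x₀ - σ₀) Q`; since `σ_{i+1} ≠ σ₀`, the cofactor `Q`, of degree `≤ d - 1`,
vanishes on the grid of degree `d - 1` whose first coordinate runs through `σ₁, σ₂, …`.
-/

open Set

namespace MvPolynomial

variable {R σ : Type*}

section CommSemiring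

variable [CommSemiring R] {n : ℕ}

theorem eval_eval_C_finSuccEquiv (P : MvPolynomial (Fin (n + 1)) R) (c : R) (s : Fin n → R) :
    eval s ((finSuccEquiv R n P).eval (C c)) = eval (Fin.cons c s) P := by
  rw [eval_eq_eval_mv_eval', ← Polynomial.eval₂_at_apply, eval_C, Polynomial.eval_map]

theorem totalDegree_eval_C_finSuccEquiv_le (P : MvPolynomial (Fin (n + 1)) R) (c : R) :
    ((finSuccEquiv R n P).eval (C c)).totalDegree ≤ P.totalDegree := by
  rw [Polynomial.eval_eq_sum_range]
  refine totalDegree_finsetSum_le fun i _ => (totalDegree_mul _ _).trans ?_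
  rw [← map_pow, totalDegree_C, add_zero]
  rcases eq_or_ne ((finSuccEquiv R n P).coeff i) 0 with h | h
  · simp [h]
  · have := totalDegree_coeff_finSuccEquiv_add_le P i h
    omega

theorem eq_zero_of_totalDegree_eq_zero_of_eval_eq_zero {P : MvPolynomial σ R}
    (hP : P.totalDegree = 0) {x : σ → R} (hx : eval x P = 0) : P = 0 := by
  rw [totalDegree_eq_zero_iff_eq_C] at hP
  rw [hP] at hx ⊢
  simpa using hx

end CommSemiring

section CommRing

variable [CommRing R] {n : ℕ}

theorem X_zero_sub_C_dvd_of_eval_C_finSuccEquiv_eq_zero {P : MvPolynomial (Fin (n + 1)) R} {c : R}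
    (h : (finSuccEquiv R n P).eval (C c) = 0) : X 0 - C c ∣ P := by
  obtain ⟨Q, hQ⟩ := Polynomial.dvd_iff_isRoot.mpr h
  refine ⟨(finSuccEquiv R n).symm Q, (finSuccEquiv R n).injective ?_⟩
  rw [map_mul, map_sub, finSuccEquiv_X_zero, AlgEquiv.apply_symm_apply, hQ]
  simp [finSuccEquiv_apply]

theorem totalDegree_X_sub_C [Nontrivial R] (i : σ) (c : R) :
    (X i - C c).totalDegree = 1 := by
  rw [sub_eq_add_neg, ← C_neg, totalDegree_add_eq_left_of_totalDegree_lt] <;> simp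

theorem X_sub_C_ne_zero [Nontrivial R] (i : σ) (c : R) : X i - C c ≠ 0 := fun h => by
  simpa [h] using totalDegree_X_sub_C i c

def VanishesOnSimplexGrid (τ : Fin n → ℕ → R) (d : ℕ) (P : MvPolynomial (Fin n) R) : Prop :=
  ∀ I : Fin n → ℕ, ∑ k, I k ≤ d → eval (fun k => τ k (I k)) P = 0

theorem VanishesOnSimplexGrid.eval_C_finSuccEquiv {τ : Fin (n + 1) → ℕ → R} {d : ℕ}
    {P : MvPolynomial (Fin (n + 1)) R} (hP : VanishesOnSimplexGrid τ d P) :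
    VanishesOnSimplexGrid (fun k => τ k.succ) d ((finSuccEquiv R n P).eval (C (τ 0 0))) := by
  intro I hI
  rw [eval_eval_C_finSuccEquiv]
  convert hP (Fin.cons 0 I) (by simpa [Fin.sum_univ_succ] using hI) using 2
  congr 1
  funext k
  cases k using Fin.cases <;> simp

theorem VanishesOnSimplexGrid.of_X_zero_sub_C_mul [IsDomain R] {τ : Fin (n + 1) → ℕ → R} {d : ℕ}
    (hτ : InjOn (τ 0) (Iic (d + 1))) {Q : MvPolynomial (Fin (n + 1)) R}
    (hQ : VanishesOnSimplexGrid τ (d + 1) ((X 0 - C (τ 0 0)) * Q)) :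
    VanishesOnSimplexGrid (Function.update τ 0 (τ 0 ∘ Nat.succ)) d Q := by
  intro I hI
  have hsum : ∑ k, ((I + Pi.single 0 1 : Fin (n + 1) → ℕ) k) ≤ d + 1 := by
    simpa [Finset.sum_add_distrib] using hI
  have hI₀ : I 0 ≤ d :=
    (Finset.single_le_sum (fun _ _ => Nat.zero_le _) (Finset.mem_univ 0)).trans hI
  have hne : τ 0 (I 0 + 1) - τ 0 0 ≠ 0 := fun h =>
    Nat.succ_ne_zero _ (hτ (mem_Iic.mpr (by omega)) (by simp) (sub_eq_zero.mp h))
  have hprod := hQ _ hsum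
  rw [map_mul, map_sub, eval_X, eval_C] at hprod
  convert (mul_eq_zero.mp hprod).resolve_left (by simpa using hne) using 2
  congr 1
  funext k
  by_cases hk : k = 0
  · subst hk; simp
  · simp [hk]

theorem VanishesOnSimplexGrid.eq_zero [IsDomain R] {d : ℕ} {τ : Fin n → ℕ → R}
    (hτ : ∀ k, InjOn (τ k) (Iic d)) {P : MvPolynomial (Fin n) R} (hdeg : P.totalDegree ≤ d)
    (hP : VanishesOnSimplexGrid τ d P) : P = 0 := by
  induction n generalizing d with
  | zero =>
    refine eq_zero_of_totalDegree_eq_zero_of_eval_eq_zero ?_ (hP 0 (by simp))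
    exact (totalDegree_eq_zero_iff _ P).mpr fun s _ k => k.elim0
  | succ n ihn =>
    induction d generalizing τ P with
    | zero => exact eq_zero_of_totalDegree_eq_zero_of_eval_eq_zero (by omega) (hP 0 (by simp))
    | succ d ihd =>
      have hrestrict : (finSuccEquiv R n P).eval (C (τ 0 0)) = 0 :=
        ihn (fun k => hτ k.succ) ((totalDegree_eval_C_finSuccEquiv_le P _).trans hdeg)
          hP.eval_C_finSuccEquiv
      obtain ⟨Q, rfl⟩ := X_zero_sub_C_dvd_of_eval_C_finSuccEquiv_eq_zero hrestrict
      rcases eq_or_ne Q 0 with rfl | hQ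
      · exact mul_zero _
      refine absurd (ihd ?_ ?_ (hP.of_X_zero_sub_C_mul (hτ 0))) hQ
      · intro k
        by_cases hk : k = 0
        · subst hk
          rw [Function.update_self]
          exact (hτ 0).comp Nat.succ_injective.injOn fun _ => Nat.succ_le_succ
        · simpa [hk] using (hτ k).mono (Iic_subset_Iic.mpr d.le_succ)
      · rw [totalDegree_mul_of_isDomain (X_sub_C_ne_zero 0 _) hQ, totalDegree_X_sub_C] at hdeg
        omega

theorem det_prod_pow_ne_zero_of_unisolvent {ι : Type*} [Fintype ι] [DecidableEq ι] [Fintype σ]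
    [IsDomain R] (x : ι → σ → R) (e : ι → σ → ℕ) (he : Function.Injective e)
    (h : ∀ P : MvPolynomial σ R, (∀ s ∈ P.support, ⇑s ∈ range e) → (∀ i, eval (x i) P = 0) →
      P = 0) :
    (Matrix.of fun i j => ∏ k, x i k ^ e j k).det ≠ 0 := by
  classical
  intro hdet
  obtain ⟨v, hv, hMv⟩ := Matrix.exists_mulVec_eq_zero_iff.mpr hdet
  let P := ∑ j, monomial (Finsupp.equivFunOnFinite.symm (e j)) (v j)
  have hcoeff (j : ι) : coeff (Finsupp.equivFunOnFinite.symm (e j)) P = v j := by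
    simp [P, coeff_sum, coeff_monomial, he.eq_iff]
  have hsupp : ∀ s ∈ P.support, ⇑s ∈ range e := by
    intro s hs
    obtain ⟨j, -, hj⟩ := Finset.mem_biUnion.mp (support_sum hs)
    exact ⟨j, by rw [Finset.mem_singleton.mp (support_monomial_subset hj)]; simp⟩
  have hP : P = 0 := h P hsupp fun i => by
    simpa [P, eval_monomial, Finsupp.prod_fintype, Matrix.mulVec, dotProduct, mul_comm]
      using congrFun hMv i
  exact hv (_root_.funext fun j => by simpa [hP] using (hcoeff j).symm)

end CommRing

end MvPolynomial

theorem lattice_action_multivariate_vandermonde_general (m d : ℕ)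
    (σ : Fin (d + 1) → ℝ)
    (hσinj : Function.Injective σ) :
    (Matrix.of fun (I J : {f : Fin m → Fin (d + 1) // ∑ k, (f k : ℕ) ≤ d}) =>
        ∏ k, σ (I.val k) ^ ((J.val k : ℕ))).det ≠ 0 := by
  refine MvPolynomial.det_prod_pow_ne_zero_of_unisolvent _ _
    (fun _ _ h => by ext k; exact congrFun h k) fun P hsupp hP => ?_
  have hval {i : ℕ} (hi : i ≤ d) : (Fin.ofNat (d + 1) i : ℕ) = i := Nat.mod_eq_of_lt (by omega)
  refine MvPolynomial.VanishesOnSimplexGrid.eq_zero (d := d)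
    (τ := fun _ i => σ (Fin.ofNat (d + 1) i))
    (fun _ i hi j hj hij => ?_) ?_ fun I hI => ?_
  · rw [← hval hi, ← hval hj, hσinj hij]
  · refine Finset.sup_le fun s hs => ?_
    obtain ⟨J, hJ⟩ := hsupp s hs
    simpa [Finsupp.sum_fintype, ← hJ] using J.2
  · have hId (k) : I k ≤ d :=
      (Finset.single_le_sum (fun _ _ => Nat.zero_le _) (Finset.mem_univ k)).trans hI
    simpa using hP ⟨fun k => Fin.ofNat (d + 1) (I k), by simpa only [hval (hId _)] using hI⟩

/-- Let `𝓘 = {(i₁,…,i_m) : Σ i_k ≤ d}` and `s_I = (σ_{i₁},…,σ_{i_m})`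
for pairwise distinct `σ₀,…,σ_d ∈ (0,1)` (so that `s_{I₁,k} ≠ s_{I₂,k}` whenever
`I₁ k ≠ I₂ k`).  Then the generalized Vandermonde matrix `M = (s_I^J)_{I,J ∈ 𝓘}`,
`s^J = Π_k s_k^{j_k}`, is invertible. -/
theorem lattice_action_multivariate_vandermonde (m d : ℕ)
    (σ : Fin (d + 1) → ℝ) (hσ : ∀ i, σ i ∈ Ioo (0 : ℝ) 1)
    (hσinj : Function.Injective σ) :
    (Matrix.of fun (I J : {f : Fin m → Fin (d + 1) // ∑ k, (f k : ℕ) ≤ d}) =>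
        ∏ k, σ (I.val k) ^ ((J.val k : ℕ))).det ≠ 0 :=
  lattice_action_multivariate_vandermonde_general m d σ hσinj
end
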